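/- Making a node of L1 directly observable does not affect whether any cycle in L_C violates Property O2: after adding any subset of L1 as outputs, each cycle in L_C still consists solely of non-directly-observable nodes none of which is the unique in-neighbor of a node outside the cycle. -/
import Mathlib


/-- One synchronous step of a conjunctive Boolean network with dependency relation `adj`
(`adj j i` means there is an edge `j → i`). -/
def cbnStep {n : ℕ} (adj : Fin n → Fin n → Prop) [DecidableRel adj]
    (x : Fin n → Bool) : Fin n → Bool :=
  fun i => decide (∀ j, adj j i → x j = true)

/-- Observability with the set `O` of directly observable nodes as outputs. -/
def ObservableS (n : ℕ) (adj : Fin n → Fin n → Prop) [DecidableRel adj]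
    (O : Finset (Fin n)) : Prop :=
  ∃ N : ℕ, ∀ x y : Fin n → Bool,
    (∀ k ≤ N, ∀ j ∈ O, (cbnStep adj)^[k] x j = (cbnStep adj)^[k] y j) → x = y

/-- `UIN adj i j` : `X_j` is a node, other than `X_i`, whose in-neighbor set is exactly `{X_i}`. -/
def UIN {n : ℕ} (adj : Fin n → Fin n → Prop) (i j : Fin n) : Prop :=
  j ≠ i ∧ ∀ p : Fin n, adj p j ↔ p = i

/-- A "bad" cycle (a cycle of `L_C`): a cycle of non-directly-observable nodes, each of
in-degree one and each the unique in-neighbor of some other node, such that no node of the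
cycle is the unique in-neighbor of a node outside the cycle (it violates Property O2). -/
def BadCycle {n : ℕ} (adj : Fin n → Fin n → Prop) (O : Finset (Fin n))
    (L : ℕ) (c : Fin L → Fin n) : Prop :=
  ∃ hL : 0 < L, Function.Injective c ∧
    (∀ t : Fin L, adj (c t) (c ⟨(t.val + 1) % L, Nat.mod_lt _ hL⟩)) ∧
    (∀ t : Fin L, c t ∉ O) ∧
    (∀ t : Fin L, ∃! p : Fin n, adj p (c t)) ∧
    (∀ t : Fin L, ∃ j : Fin n, UIN adj (c t) j) ∧
    ¬ ∃ (t : Fin L) (j : Fin n), (∀ s : Fin L, c s ≠ j) ∧ UIN adj (c t) j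

open scoped Classical in
/-- Adding any subset of `L1` as direct outputs does not affect whether a bad cycle
violates Property O2: each bad cycle remains a bad cycle for the enlarged output set. -/
theorem L1_does_not_fix_bad_cycles (n : ℕ) (adj : Fin n → Fin n → Prop)
    [DecidableRel adj] (O A : Finset (Fin n))
    (hA : A ⊆ Finset.univ.filter (fun i : Fin n => i ∉ O ∧ ¬ ∃ j : Fin n, UIN adj i j)) :
    ∀ (L : ℕ) (c : Fin L → Fin n), BadCycle adj O L c → BadCycle adj (O ∪ A) L c := by
  rintro L c ⟨hL, hinj, hcyc, hnotO, hdeg, huin, hno⟩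
  refine ⟨hL, hinj, hcyc, ?_, hdeg, huin, hno⟩
  intro t ht
  rcases Finset.mem_union.mp ht with h | h
  · exact hnotO t h
  · have := hA h
    simp only [Finset.mem_filter] at this
    exact this.2.2 (huin t)
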